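/- For every n ∈ ℕ with n ≥ 1, the Rodrigues polynomial q_n has n distinct real roots, all lying in the open interval (−1, 1): there exist ξ_1 < ξ_2 < ⋯ < ξ_n in (−1, 1) with q_n(ξ_i) = 0 for each i. -/

import Mathlib

/-!
Write `f(x) = (x² − 1)ⁿ`. Since `±1` are roots of `f` of multiplicity `n`, every derivative
`f⁽ᵏ⁾` with `k < n` vanishes at `±1`. Inductively, if `f⁽ᵏ⁾` has `k` distinct zeros in `(−1, 1)`,
then together with `±1` these are `k + 2` zeros, and Rolle's theorem between consecutive ones
yields `k + 1` distinct zeros of `f⁽ᵏ⁺¹⁾` in `(−1, 1)`.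
-/

open Polynomial Set

/-- The (unnormalized) Rodrigues polynomial `q_n(x) = dⁿ/dxⁿ[(x² − 1)ⁿ]`. -/
noncomputable def rodrigues (n : ℕ) : ℝ → ℝ :=
  iteratedDeriv n (fun x : ℝ => (x ^ 2 - 1) ^ n)

theorem Fin.strictMono_snoc {α : Type*} [Preorder α] {n : ℕ} {f : Fin n → α} {a : α}
    (hf : StrictMono f) (ha : ∀ j, f j < a) : StrictMono (Fin.snoc f a : Fin (n + 1) → α) := by
  intro i j hij
  induction j using Fin.lastCases with
  | last =>
    obtain ⟨i, rfl⟩ := Fin.exists_castSucc_eq.mpr hij.ne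
    simpa using ha i
  | cast j =>
    obtain ⟨i, rfl⟩ :=
      Fin.exists_castSucc_eq.mpr (Fin.ne_last_of_lt (hij.trans (Fin.castSucc_lt_last j)))
    simpa using hf (Fin.castSucc_lt_castSucc_iff.mp hij)

theorem Fin.strictMono_cons_snoc {α : Type*} [Preorder α] {n : ℕ} {f : Fin n → α} {a b : α}
    (hab : a < b) (hf : StrictMono f) (hmem : ∀ j, f j ∈ Ioo a b) :
    StrictMono (Fin.cons a (Fin.snoc f b) : Fin (n + 2) → α) := by
  refine Fin.strictMono_cons.mpr ⟨fun j => ?_, Fin.strictMono_snoc hf fun j => (hmem j).2⟩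
  induction j using Fin.lastCases with
  | last => simpa using hab
  | cast j => simpa using (hmem j).1

theorem exists_strictMono_deriv_eq_zero {f : ℝ → ℝ} (hf : Continuous f) {m : ℕ}
    {η : Fin (m + 1) → ℝ} (hη : StrictMono η) (hzero : ∀ i, f (η i) = 0) :
    ∃ c : Fin m → ℝ, StrictMono c ∧
      ∀ i, c i ∈ Ioo (η i.castSucc) (η i.succ) ∧ deriv f (c i) = 0 := by
  have hrolle (i : Fin m) : ∃ x ∈ Ioo (η i.castSucc) (η i.succ), deriv f x = 0 :=
    exists_deriv_eq_zero (hη Fin.castSucc_lt_succ) hf.continuousOn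
      ((hzero _).trans (hzero _).symm)
  choose c hc hc' using hrolle
  refine ⟨c, fun i j hij => ?_, fun i => ⟨hc i, hc' i⟩⟩
  calc c i < η i.succ := (hc i).2
    _ ≤ η j.castSucc := hη.monotone (Fin.succ_le_castSucc_iff.mpr hij)
    _ < c j := (hc j).1

theorem exists_strictMono_iteratedDeriv_eq_zero {f : ℝ → ℝ} {a b : ℝ} (hab : a < b) {m : ℕ}
    (hf : ContDiff ℝ m f) (ha : ∀ j < m, iteratedDeriv j f a = 0)
    (hb : ∀ j < m, iteratedDeriv j f b = 0) :
    ∃ ξ : Fin m → ℝ, StrictMono ξ ∧ ∀ i, ξ i ∈ Ioo a b ∧ iteratedDeriv m f (ξ i) = 0 := by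
  induction m with
  | zero => exact ⟨Fin.elim0, fun i => i.elim0, fun i => i.elim0⟩
  | succ m ih =>
    obtain ⟨ξ, hξ, hξmem⟩ := ih (hf.of_le (by norm_cast; omega))
      (fun j hj => ha j (by omega)) (fun j hj => hb j (by omega))
    set η : Fin (m + 2) → ℝ := Fin.cons a (Fin.snoc ξ b)
    have hη : StrictMono η := Fin.strictMono_cons_snoc hab hξ fun i => (hξmem i).1
    have hzero (i : Fin (m + 2)) : iteratedDeriv m f (η i) = 0 := by
      induction i using Fin.cases with
      | zero => simpa [η] using ha m (by omega)
      | succ i =>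
        induction i using Fin.lastCases with
        | last => simpa [η] using hb m (by omega)
        | cast i => simpa [η] using (hξmem i).2
    obtain ⟨c, hc, hcroot⟩ := exists_strictMono_deriv_eq_zero
      (hf.continuous_iteratedDeriv m (by norm_cast; omega)) hη hzero
    have hIoo (i : Fin (m + 1)) : Ioo (η i.castSucc) (η i.succ) ⊆ Ioo a b := by
      simpa [η] using Ioo_subset_Ioo (hη.monotone (Fin.zero_le i.castSucc))
        (hη.monotone (Fin.le_last i.succ))
    refine ⟨c, hc, fun i => ⟨hIoo i (hcroot i).1, ?_⟩⟩
    rw [iteratedDeriv_succ]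
    exact (hcroot i).2

protected theorem Polynomial.iteratedDeriv {𝕜 : Type*} [NontriviallyNormedField 𝕜] (p : 𝕜[X])
    (k : ℕ) : iteratedDeriv k (fun x => p.eval x) = fun x => (derivative^[k] p).eval x := by
  induction k with
  | zero => simp
  | succ k ih =>
    ext x
    rw [iteratedDeriv_succ, ih, Function.iterate_succ_apply', Polynomial.deriv]

theorem Polynomial.IsRoot.iterate_derivative_pow {R : Type*} [CommRing R] {p : R[X]} {t : R}
    (ht : p.IsRoot t) {n k : ℕ} (hk : k < n) : (derivative^[k] (p ^ n)).IsRoot t := by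
  obtain ⟨q, hq⟩ := pow_sub_dvd_iterate_derivative_pow p n k
  rw [IsRoot, hq, eval_mul, eval_pow, ht.eq_zero, zero_pow (by omega), zero_mul]

theorem iteratedDeriv_sq_sub_one_pow_eq_zero {n k : ℕ} (hk : k < n) {t : ℝ} (ht : t ^ 2 = 1) :
    iteratedDeriv k (fun x : ℝ => (x ^ 2 - 1) ^ n) t = 0 := by
  have hpoly : (fun x : ℝ => (x ^ 2 - 1) ^ n) = fun x => (((X : ℝ[X]) ^ 2 - 1) ^ n).eval x := by
    ext x
    simp
  rw [hpoly, Polynomial.iteratedDeriv]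
  exact IsRoot.iterate_derivative_pow (by simp [ht]) hk

theorem rodrigues_roots_general (n : ℕ) :
    ∃ ξ : Fin n → ℝ, StrictMono ξ ∧
      ∀ i, ξ i ∈ Set.Ioo (-1 : ℝ) 1 ∧ rodrigues n (ξ i) = 0 :=
  exists_strictMono_iteratedDeriv_eq_zero (by norm_num) (by fun_prop)
    (fun _ hj => iteratedDeriv_sq_sub_one_pow_eq_zero hj (by norm_num))
    (fun _ hj => iteratedDeriv_sq_sub_one_pow_eq_zero hj (by norm_num))

/-- For `n ≥ 1`, the Rodrigues polynomial `q_n` has `n` distinct real roots, all lying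
in the open interval `(−1, 1)`. -/
theorem rodrigues_roots (n : ℕ) (hn : 1 ≤ n) :
    ∃ ξ : Fin n → ℝ, StrictMono ξ ∧
      ∀ i, ξ i ∈ Set.Ioo (-1 : ℝ) 1 ∧ rodrigues n (ξ i) = 0 :=
  rodrigues_roots_general n
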